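/- arXiv:1203.6527 — 2 statements merged into one kernel-verified Lean document; each statement's English description precedes it below -/
import Mathlib

section
/- There exists a constant C > 0 such that for every x ∈ ℝ³, the integral A(x) = ∫_{ℝ³} (∫₀^∞ e^{-t - |y|²/(4κγ₁ t)} t^{-3/2} dt) · |x|²/|x−y|² dy is bounded by C, uniformly in x, where κγ₁ > 0 is a fixed constant. -/
noncomputable section
open MeasureTheory Real Filter
open scoped ENNReal RealInnerProductSpace BigOperators

abbrev E3 := EuclideanSpace ℝ (Fin 3)

def pd (i : Fin 3) (f : E3 → ℝ) (x : E3) : ℝ := fderiv ℝ f x (EuclideanSpace.single i (1:ℝ))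
def lap (f : E3 → ℝ) (x : E3) : ℝ := ∑ i, pd i (pd i f) x
def divg (v : E3 → E3) (x : E3) : ℝ := ∑ i, fderiv ℝ v x (EuclideanSpace.single i (1:ℝ)) i
def lapv (v : E3 → E3) (x : E3) : E3 :=
  (WithLp.equiv 2 (Fin 3 → ℝ)).symm fun i => lap (fun y => v y i) x

/-! From `e^{-s} ≤ n! / sⁿ` the kernel satisfies `K(y) ≲ |y|⁻²` and `K(y) ≲ |y|⁻⁶`, so `K(y) |y|²`
is bounded and `K(y) (1 + |y|²)` is integrable on `ℝ³`. By `|x|² ≤ 2|x - y|² + 2|y|²` the integrand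
is at most `2 K(y) (1 + |y|²)`, plus `2 sup (K |·|²) / |x - y|²` where `|x - y| < 1`; the latter has
the same integral for every `x`, finite since `|z|⁻²` is integrable near `0` in dimension `3 > 2`. -/

open Metric Module
open scoped Nat

section SingularWeight

variable {E : Type*} [NormedAddCommGroup E]

def unitBallInvSq : E → ℝ := (ball (0 : E) 1).indicator fun z => (‖z‖ ^ 2)⁻¹

lemma unitBallInvSq_nonneg (z : E) : 0 ≤ unitBallInvSq z :=
  Set.indicator_nonneg (fun _ _ => by positivity) z

lemma unitBallInvSq_of_norm_lt_one {z : E} (hz : ‖z‖ < 1) : unitBallInvSq z = (‖z‖ ^ 2)⁻¹ :=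
  Set.indicator_of_mem (mem_ball_zero_iff.2 hz) _

lemma unitBallInvSq_of_one_le_norm {z : E} (hz : 1 ≤ ‖z‖) : unitBallInvSq z = 0 :=
  Set.indicator_of_notMem (by simpa using hz) _

variable [NormedSpace ℝ E] [FiniteDimensional ℝ E] [MeasurableSpace E] [BorelSpace E]
  (μ : Measure E) [μ.IsAddHaarMeasure]

lemma integrable_unitBallInvSq (hd : 2 < finrank ℝ E) : Integrable (unitBallInvSq (E := E)) μ := by
  refine (integrable_indicator_iff measurableSet_ball).2 <|
    integrableOn_ball_of_norm_le_rpow (C := 1) (α := 2) (by omega) (by exact_mod_cast hd)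
      (ae_of_all _ fun z => ?_) (by fun_prop)
  rw [Real.norm_of_nonneg (by positivity), one_mul, rpow_neg (norm_nonneg z), rpow_two]

end SingularWeight

section WeightedIntegral

variable {E : Type*} [NormedAddCommGroup E]

lemma mul_sq_norm_div_sq_norm_sub_le {k M : ℝ} (hk : 0 ≤ k) (x y : E) (hkM : k * ‖y‖ ^ 2 ≤ M) :
    k * (‖x‖ ^ 2 / ‖x - y‖ ^ 2) ≤ 2 * (k * (1 + ‖y‖ ^ 2)) + 2 * M * unitBallInvSq (y - x) := by
  have hM : 0 ≤ M := (by positivity : 0 ≤ k * ‖y‖ ^ 2).trans hkM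
  rcases eq_or_ne x y with rfl | hxy
  · rw [sub_self, norm_zero, zero_pow two_ne_zero, div_zero, mul_zero]
    exact add_nonneg (by positivity) (mul_nonneg (by positivity) (unitBallInvSq_nonneg _))
  have hd : 0 < ‖x - y‖ := norm_pos_iff.2 (sub_ne_zero.2 hxy)
  have hx : ‖x‖ ^ 2 ≤ 2 * ‖x - y‖ ^ 2 + 2 * ‖y‖ ^ 2 := by
    have := norm_sub_norm_le x y
    nlinarith [norm_nonneg x, norm_nonneg y, sq_nonneg (‖x - y‖ - ‖y‖)]
  calc k * (‖x‖ ^ 2 / ‖x - y‖ ^ 2)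
      ≤ k * ((2 * ‖x - y‖ ^ 2 + 2 * ‖y‖ ^ 2) / ‖x - y‖ ^ 2) := by gcongr
    _ = 2 * k + 2 * (k * ‖y‖ ^ 2 / ‖x - y‖ ^ 2) := by field_simp
    _ ≤ 2 * (k * (1 + ‖y‖ ^ 2)) + 2 * M * unitBallInvSq (y - x) := by
      rcases lt_or_ge ‖x - y‖ 1 with hlt | hge
      · rw [unitBallInvSq_of_norm_lt_one (by rwa [norm_sub_rev]), norm_sub_rev y]
        have : k * ‖y‖ ^ 2 / ‖x - y‖ ^ 2 ≤ M * (‖x - y‖ ^ 2)⁻¹ := by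
          rw [← div_eq_mul_inv]; gcongr
        nlinarith [mul_nonneg hk (sq_nonneg ‖y‖)]
      · rw [unitBallInvSq_of_one_le_norm (by rwa [norm_sub_rev])]
        have : k * ‖y‖ ^ 2 / ‖x - y‖ ^ 2 ≤ k * ‖y‖ ^ 2 :=
          div_le_self (by positivity) (one_le_pow₀ hge)
        nlinarith

variable [NormedSpace ℝ E] [FiniteDimensional ℝ E] [MeasurableSpace E] [BorelSpace E]
  (μ : Measure E) [μ.IsAddHaarMeasure]

theorem integral_mul_sq_norm_div_sq_norm_sub_le (hd : 2 < finrank ℝ E) {k g : E → ℝ} {M : ℝ}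
    (hk : ∀ y, 0 ≤ k y) (hg : Integrable g μ) (hkg : ∀ᵐ y ∂μ, k y * (1 + ‖y‖ ^ 2) ≤ g y)
    (hkM : ∀ y, k y * ‖y‖ ^ 2 ≤ M) (x : E) :
    ∫ y, k y * (‖x‖ ^ 2 / ‖x - y‖ ^ 2) ∂μ
      ≤ 2 * (∫ y, g y ∂μ) + 2 * M * ∫ z, unitBallInvSq z ∂μ := by
  have hW := (integrable_unitBallInvSq μ hd).comp_sub_right x
  calc ∫ y, k y * (‖x‖ ^ 2 / ‖x - y‖ ^ 2) ∂μ
      ≤ ∫ y, (2 * g y + 2 * M * unitBallInvSq (y - x)) ∂μ := by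
        refine integral_mono_of_nonneg (ae_of_all _ fun y => ?_) ((hg.const_mul 2).add
          (hW.const_mul _)) (hkg.mono fun y hy => ?_)
        · have := hk y
          positivity
        · have := mul_sq_norm_div_sq_norm_sub_le (hk y) x y (hkM y)
          dsimp only
          linarith
    _ = 2 * (∫ y, g y ∂μ) + 2 * M * ∫ z, unitBallInvSq z ∂μ := by
        rw [integral_add (hg.const_mul 2) (hW.const_mul _), integral_const_mul, integral_const_mul,
          integral_sub_right_eq_self]

end WeightedIntegral

section BesselKernel

lemma exp_neg_div_le {a t : ℝ} (ha : 0 < a) (ht : 0 < t) (n : ℕ) :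
    exp (-(a / t)) ≤ n ! * t ^ n / a ^ n := by
  have := inv_anti₀ (by positivity) (pow_div_factorial_le_exp (a / t) (by positivity) n)
  rwa [← exp_neg, inv_div, div_pow, div_div_eq_mul_div] at this

theorem setIntegral_exp_neg_sub_div_mul_rpow_le {a s : ℝ} (ha : 0 < a) (n : ℕ)
    (hs : 0 < n + s + 1) :
    ∫ t in Set.Ioi 0, exp (-t - a / t) * t ^ s ≤ n ! * Gamma (n + s + 1) / a ^ n := by
  calc ∫ t in Set.Ioi 0, exp (-t - a / t) * t ^ s
      ≤ ∫ t in Set.Ioi 0, n ! / a ^ n * (exp (-t) * t ^ (n + s + 1 - 1)) := by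
        refine integral_mono_of_nonneg ?_ ((GammaIntegral_convergent hs).const_mul _) ?_
        · filter_upwards [ae_restrict_mem measurableSet_Ioi] with t (ht : 0 < t)
          positivity
        · filter_upwards [ae_restrict_mem measurableSet_Ioi] with t (ht : 0 < t)
          calc exp (-t - a / t) * t ^ s = exp (-t) * t ^ s * exp (-(a / t)) := by
                rw [sub_eq_add_neg, exp_add]; ring
            _ ≤ exp (-t) * t ^ s * (n ! * t ^ n / a ^ n) := by
                gcongr; exact exp_neg_div_le ha ht n
            _ = n ! / a ^ n * (exp (-t) * t ^ (n + s + 1 - 1)) := by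
                rw [add_sub_cancel_right, rpow_add ht, rpow_natCast]; ring
    _ = n ! * Gamma (n + s + 1) / a ^ n := by
        rw [integral_const_mul, ← Gamma_eq_integral hs]; ring

variable {E : Type*} [NormedAddCommGroup E]

def besselKernel (c : ℝ) (y : E) : ℝ :=
  ∫ t in Set.Ioi (0 : ℝ), exp (-t - ‖y‖ ^ 2 / (4 * c * t)) * t ^ (-(3 : ℝ) / 2)

lemma besselKernel_nonneg (c : ℝ) (y : E) : 0 ≤ besselKernel c y :=
  setIntegral_nonneg measurableSet_Ioi fun t (ht : 0 < t) => by positivity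

variable {c : ℝ} (hc : 0 < c)
include hc

lemma besselKernel_le {y : E} (hy : y ≠ 0) {n : ℕ} (hn : 1 ≤ n) :
    besselKernel c y ≤ n ! * Gamma (n - 1 / 2) * (4 * c) ^ n / ‖y‖ ^ (2 * n) := by
  have hn' : (1 : ℝ) ≤ n := by exact_mod_cast hn
  have := setIntegral_exp_neg_sub_div_mul_rpow_le (a := ‖y‖ ^ 2 / (4 * c)) (s := -(3 : ℝ) / 2)
    (by positivity) n (by linarith)
  simp only [div_div] at this
  refine this.trans_eq ?_
  rw [show (n : ℝ) + -(3 : ℝ) / 2 + 1 = n - 1 / 2 by ring, div_pow, pow_mul]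
  field_simp

lemma besselKernel_mul_sq_norm_le (y : E) : besselKernel c y * ‖y‖ ^ 2 ≤ 4 * c * Gamma (1 / 2) := by
  have hΓ := Gamma_pos_of_pos (one_half_pos (α := ℝ))
  rcases eq_or_ne y 0 with rfl | hy
  · rw [norm_zero, zero_pow two_ne_zero, mul_zero]
    positivity
  have := besselKernel_le hc hy le_rfl
  norm_num at this
  rwa [le_div_iff₀ (by positivity), mul_comm (Gamma _)] at this

lemma besselKernel_mul_one_add_sq_norm_le {y : E} (hy : y ≠ 0) :
    besselKernel c y * (1 + ‖y‖ ^ 2) ≤ 8 * c * Gamma (1 / 2) * unitBallInvSq y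
      + 192 * Gamma (5 / 2) * (4 * c) ^ 3 * (1 + ‖y‖) ^ (-4 : ℝ) := by
  have hK := besselKernel_nonneg c y
  have hy' : 0 < ‖y‖ := norm_pos_iff.2 hy
  rw [rpow_neg (by positivity), rpow_ofNat]
  rcases lt_or_ge ‖y‖ 1 with hlt | hge
  · have := besselKernel_le hc hy le_rfl
    norm_num at this
    rw [unitBallInvSq_of_norm_lt_one hlt]
    calc besselKernel c y * (1 + ‖y‖ ^ 2) ≤ besselKernel c y * 2 := by gcongr; nlinarith
      _ ≤ Gamma (1 / 2) * (4 * c) / ‖y‖ ^ 2 * 2 := by gcongr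
      _ = 8 * c * Gamma (1 / 2) * (‖y‖ ^ 2)⁻¹ := by ring
      _ ≤ _ := le_add_of_nonneg_right (by positivity)
  · have := besselKernel_le hc hy (n := 3) (by norm_num)
    norm_num at this
    rw [unitBallInvSq_of_one_le_norm hge]
    set A := 6 * Gamma (5 / 2) * (4 * c) ^ 3
    calc besselKernel c y * (1 + ‖y‖ ^ 2) ≤ besselKernel c y * (2 * ‖y‖ ^ 2) := by
          gcongr; nlinarith
      _ ≤ A / ‖y‖ ^ 6 * (2 * ‖y‖ ^ 2) := by gcongr
      _ = 32 * A / (2 * ‖y‖) ^ 4 := by field_simp; ring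
      _ ≤ 32 * A / (1 + ‖y‖) ^ 4 := by gcongr; linarith
      _ = _ := by ring

end BesselKernel

/-- Uniform bound on the weighted integral of the Bessel kernel. -/
theorem stmt1 (c : ℝ) (hc : 0 < c) :
    ∃ C > 0, ∀ x : E3,
      (∫ y : E3, (∫ t in Set.Ioi (0:ℝ), Real.exp (-t - ‖y‖^2 / (4 * c * t)) * t ^ (-(3:ℝ)/2)) *
        (‖x‖^2 / ‖x - y‖^2)) ≤ C := by
  have hd : 2 < finrank ℝ E3 := by simp
  set g : E3 → ℝ := fun y => 8 * c * Gamma (1 / 2) * unitBallInvSq y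
    + 192 * Gamma (5 / 2) * (4 * c) ^ 3 * (1 + ‖y‖) ^ (-4 : ℝ)
  have hg : Integrable g := ((integrable_unitBallInvSq volume hd).const_mul _).add
    ((integrable_one_add_norm (by norm_num)).const_mul _)
  have hKg : ∀ᵐ y : E3, besselKernel c y * (1 + ‖y‖ ^ 2) ≤ g y :=
    (volume.ae_ne (0 : E3)).mono fun y hy => besselKernel_mul_one_add_sq_norm_le hc hy
  refine ⟨max (2 * (∫ y, g y) + 2 * (4 * c * Gamma (1 / 2)) * ∫ z : E3, unitBallInvSq z) 1,
    lt_max_of_lt_right one_pos, fun x => ?_⟩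
  exact (integral_mul_sq_norm_div_sq_norm_sub_le volume hd (besselKernel_nonneg c) hg hKg
    (besselKernel_mul_sq_norm_le hc) x).trans (le_max_left _ _)
end
end

section
/- Let b, c : ℝ³ → ℝ be functions with finite norms ‖b‖_J := ‖b‖_{L⁶} + Σ_{ν=0}^1 ‖(1+|x|)^{ν+1}∇^ν b‖_{L^∞} + ‖(1+|x|)²∇²b‖_{L^∞} (and similarly for c, including weighted L² norms of derivatives up to order 5). Then for multi-indices α, β with |α| ≤ 1 or |β| ≤ 1 and |α|, |β| ≤ 5, the pointwise product satisfies ‖(1+|x|)^{|α|+|β|} |∂_x^α b| |∂_x^β c|‖_{L²} ≤ C ‖b‖_J ‖c‖_J for a universal constant C. -/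
noncomputable section
open MeasureTheory Real Filter
open scoped ENNReal RealInnerProductSpace BigOperators

/-- The weighted `J⁵`-norm. -/
def Jnorm (b : E3 → ℝ) : ℝ≥0∞ :=
  eLpNorm b 6 volume
  + eLpNorm (fun x => (1 + ‖x‖) * |b x|) ⊤ volume
  + eLpNorm (fun x => (1 + ‖x‖)^2 * ‖iteratedFDeriv ℝ 1 b x‖) ⊤ volume
  + eLpNorm (fun x => (1 + ‖x‖)^2 * ‖iteratedFDeriv ℝ 2 b x‖) ⊤ volume
  + ∑ ν ∈ Finset.Icc 1 5,
      eLpNorm (fun x => (1 + ‖x‖)^(ν - 1) * ‖iteratedFDeriv ℝ ν b x‖) 2 volume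

/-! Split the weight as `(1+|x|)^(k+l) = (1+|x|)^(l+1) (1+|x|)^(k-1)` with `l ≤ 1`. Then
`(1+|x|)^(l+1) |∇ˡc|` is bounded in `L^∞` by `‖c‖_J`, and `(1+|x|)^(k-1) |∇ᵏb|` is bounded in `L²`:
by `‖b‖_J` directly when `k ≥ 1`, and for `k = 0` by `‖(1+|x|) b‖_∞ ‖(1+|x|)⁻²‖_{L²}`, which is
finite because `(1+|x|)⁻⁴` is integrable on `ℝ³`. Hölder's inequality `L^∞ · L² ⊆ L²` concludes,
and the case `k ≤ 1` is the same with `b` and `c` exchanged. -/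
section Weights

variable {E F : Type*} [NormedAddCommGroup E] [NormedAddCommGroup F] [NormedSpace ℝ F]

lemma continuous_one_add_norm_zpow (p : ℤ) : Continuous fun x : E => (1 + ‖x‖) ^ p :=
  (continuous_const.add continuous_norm).zpow₀ p fun x =>
    .inl (by positivity : (0 : ℝ) < 1 + ‖x‖).ne'

variable [NormedSpace ℝ E]

lemma continuous_one_add_norm_zpow_mul_norm_iteratedFDeriv {n : WithTop ℕ∞} {f : E → F}
    (hf : ContDiff ℝ n f) {m : ℕ} (hm : m ≤ n) (p : ℤ) :
    Continuous fun x => (1 + ‖x‖) ^ p * ‖iteratedFDeriv ℝ m f x‖ :=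
  (continuous_one_add_norm_zpow p).mul (hf.continuous_iteratedFDeriv hm).norm

end Weights

lemma memLp_two_one_add_norm_zpow_neg_two {E : Type*} [NormedAddCommGroup E] [NormedSpace ℝ E]
    [FiniteDimensional ℝ E] [MeasurableSpace E] [BorelSpace E] (μ : Measure E)
    [μ.IsAddHaarMeasure] (hE : Module.finrank ℝ E < 4) :
    MemLp (fun x : E => (1 + ‖x‖) ^ (-2 : ℤ)) 2 μ := by
  have hint : Integrable (fun x : E => (1 + ‖x‖) ^ (-4 : ℝ)) μ :=
    integrable_one_add_norm (by exact_mod_cast hE)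
  refine (memLp_two_iff_integrable_sq (continuous_one_add_norm_zpow _).aestronglyMeasurable).2
    (hint.congr (.of_forall fun x => ?_))
  dsimp only
  rw [← zpow_natCast, ← zpow_mul, ← Real.rpow_intCast]
  norm_num

lemma eLpNorm_mul_le_eLpNorm_top_mul_eLpNorm {α : Type*} [MeasurableSpace α] {μ : Measure α}
    (p : ℝ≥0∞) (f : α → ℝ) {g : α → ℝ} (hg : AEStronglyMeasurable g μ) :
    eLpNorm (fun x => f x * g x) p μ ≤ eLpNorm f ⊤ μ * eLpNorm g p μ :=
  eLpNorm_smul_le_eLpNorm_top_mul_eLpNorm p hg f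

lemma eLpNorm_top_weighted_iteratedFDeriv_le_Jnorm (b : E3 → ℝ) {l : ℕ} (hl : l ≤ 1) :
    eLpNorm (fun x => (1 + ‖x‖) ^ (l + 1) * ‖iteratedFDeriv ℝ l b x‖) ⊤ volume ≤ Jnorm b := by
  unfold Jnorm
  interval_cases l
  · simp only [zero_add, pow_one, norm_iteratedFDeriv_zero, Real.norm_eq_abs]
    exact ((le_add_self.trans le_self_add).trans le_self_add).trans le_self_add
  · exact (le_add_self.trans le_self_add).trans le_self_add

lemma eLpNorm_two_weighted_iteratedFDeriv_le_Jnorm (b : E3 → ℝ) {k : ℕ} (hk1 : 1 ≤ k)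
    (hk5 : k ≤ 5) :
    eLpNorm (fun x => (1 + ‖x‖) ^ (k - 1) * ‖iteratedFDeriv ℝ k b x‖) 2 volume ≤ Jnorm b :=
  le_add_left <| Finset.single_le_sum
    (f := fun ν => eLpNorm (fun x => (1 + ‖x‖) ^ (ν - 1) * ‖iteratedFDeriv ℝ ν b x‖) 2 volume)
    (fun _ _ => zero_le) (Finset.mem_Icc.2 ⟨hk1, hk5⟩)

def weightedProductConst : ℝ≥0∞ := max 1 (eLpNorm (fun x : E3 => (1 + ‖x‖) ^ (-2 : ℤ)) 2 volume)

lemma weightedProductConst_ne_top : weightedProductConst ≠ ⊤ :=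
  max_ne_top ENNReal.one_ne_top
    (memLp_two_one_add_norm_zpow_neg_two volume (by simp)).eLpNorm_ne_top

lemma eLpNorm_two_one_add_norm_zpow_mul_iteratedFDeriv_le_mul_Jnorm (b : E3 → ℝ) {k : ℕ}
    (hk : k ≤ 5) :
    eLpNorm (fun x => (1 + ‖x‖) ^ ((k : ℤ) - 1) * ‖iteratedFDeriv ℝ k b x‖) 2 volume
      ≤ weightedProductConst * Jnorm b := by
  rcases k.eq_zero_or_pos with rfl | hk1
  · have hsplit : (fun x : E3 => (1 + ‖x‖) ^ (((0 : ℕ) : ℤ) - 1) * ‖iteratedFDeriv ℝ 0 b x‖)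
        = fun x => (1 + ‖x‖) ^ (0 + 1) * ‖iteratedFDeriv ℝ 0 b x‖ * (1 + ‖x‖) ^ (-2 : ℤ) := by
      funext x
      have hx : (1 : ℝ) + ‖x‖ ≠ 0 := by positivity
      rw [mul_right_comm, ← zpow_natCast, ← zpow_add₀ hx]
      norm_num
    rw [hsplit, mul_comm weightedProductConst]
    calc _ ≤ _ := eLpNorm_mul_le_eLpNorm_top_mul_eLpNorm 2 _
            (continuous_one_add_norm_zpow (-2)).aestronglyMeasurable
      _ ≤ _ := mul_le_mul' (eLpNorm_top_weighted_iteratedFDeriv_le_Jnorm b zero_le_one)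
            (le_max_right _ _)
  · have hpow : (fun x : E3 => (1 + ‖x‖) ^ ((k : ℤ) - 1) * ‖iteratedFDeriv ℝ k b x‖)
        = fun x => (1 + ‖x‖) ^ (k - 1) * ‖iteratedFDeriv ℝ k b x‖ := by
      funext x
      rw [← zpow_natCast, Nat.cast_sub hk1, Nat.cast_one]
    rw [hpow]
    exact (eLpNorm_two_weighted_iteratedFDeriv_le_Jnorm b hk1 hk).trans
      (le_mul_of_one_le_left' (le_max_left _ _))

lemma eLpNorm_weighted_product_le {b : E3 → ℝ} (c : E3 → ℝ) (hb : ContDiff ℝ 5 b) {k l : ℕ}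
    (hk : k ≤ 5) (hl : l ≤ 1) :
    eLpNorm (fun x => (1 + ‖x‖) ^ (k + l) *
        (‖iteratedFDeriv ℝ k b x‖ * ‖iteratedFDeriv ℝ l c x‖)) 2 volume
      ≤ weightedProductConst * (Jnorm b * Jnorm c) := by
  have hsplit : (fun x => (1 + ‖x‖) ^ (k + l) *
        (‖iteratedFDeriv ℝ k b x‖ * ‖iteratedFDeriv ℝ l c x‖))
      = fun x => (1 + ‖x‖) ^ (l + 1) * ‖iteratedFDeriv ℝ l c x‖ *
        ((1 + ‖x‖) ^ ((k : ℤ) - 1) * ‖iteratedFDeriv ℝ k b x‖) := by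
    funext x
    have hx : (1 : ℝ) + ‖x‖ ≠ 0 := by positivity
    rw [mul_mul_mul_comm, ← zpow_natCast, ← zpow_natCast _ (l + 1), ← zpow_add₀ hx]
    push_cast
    ring_nf
  rw [hsplit]
  calc _ ≤ _ := eLpNorm_mul_le_eLpNorm_top_mul_eLpNorm 2 _
          (continuous_one_add_norm_zpow_mul_norm_iteratedFDeriv hb (by exact_mod_cast hk)
            _).aestronglyMeasurable
    _ ≤ _ := mul_le_mul' (eLpNorm_top_weighted_iteratedFDeriv_le_Jnorm c hl)
          (eLpNorm_two_one_add_norm_zpow_mul_iteratedFDeriv_le_mul_Jnorm b hk)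
    _ = _ := by ring

/-- Weighted product estimate (2.45). -/
theorem stmt12 : ∃ C > 0, ∀ (b c : E3 → ℝ), ContDiff ℝ 5 b → ContDiff ℝ 5 c →
    ∀ k l : ℕ, (k ≤ 1 ∨ l ≤ 1) → k ≤ 5 → l ≤ 5 →
    eLpNorm (fun x => (1 + ‖x‖)^(k + l) *
        (‖iteratedFDeriv ℝ k b x‖ * ‖iteratedFDeriv ℝ l c x‖)) 2 volume
      ≤ ENNReal.ofReal C * (Jnorm b * Jnorm c) := by
  refine ⟨weightedProductConst.toReal, ENNReal.toReal_pos
    (zero_lt_one.trans_le (le_max_left _ _)).ne' weightedProductConst_ne_top, ?_⟩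
  intro b c hb hc k l hkl hk hl
  rw [ENNReal.ofReal_toReal weightedProductConst_ne_top]
  rcases hkl with hk1 | hl1
  · simpa only [add_comm k l, mul_comm ‖iteratedFDeriv ℝ k b _‖, mul_comm (Jnorm c)]
      using eLpNorm_weighted_product_le b hc hl hk1
  · exact eLpNorm_weighted_product_le c hb hk hl1
end
end
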